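/- Suppose (μ_n, u_n) → (μ, u) in TL² and v: D → ℝ is bounded and Lipschitz on a bounded domain D. If T_n are transportation maps with (T_n)_♯ μ = μ_n and ‖Id − T_n‖_∞ → 0, then u_n ∘ T_n → u in L²(μ). Conversely, if μ_n ⇀ μ weakly and there exist transportation maps T_n with (T_n)_♯ μ = μ_n, ‖Id − T_n‖_∞ → 0, and ∫_D |u(x) − u_n(T_n(x))|² dμ(x) → 0, then (μ_n, u_n) → (μ, u) in TL². -/

import Mathlib

/-!
Take near-optimal `TL²` couplings `π_n` of `(μ, u)` and `(μ_n, u_n)` and glue each of them to the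
transport plan of `T_n` along `μ_n`: disintegrating `π_n` over its second marginal gives a measure
`θ_n` on pairs `(x, y)` with `x ∼ μ` and `(y, T_n x) ∼ π_n`, a coupling of `μ` with itself. Then
`‖u - u_n ∘ T_n‖_{L²(μ)} ≤ ‖u(x) - u(y)‖_{L²(θ_n)} + ‖u(y) - u_n(T_n x)‖_{L²(θ_n)}`; the second term
is a part of the cost of `π_n`, and the first tends to zero because the cost of `θ_n` is at most
`‖Id - T_n‖_{L²(μ)} + cost(π_n) → 0` and `u` is close in `L²(μ)` to a bounded uniformly continuous
`w`, for which `|w x - w y| ≤ ε + K |x - y|`. Conversely, the transport plan of `T_n` itself has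
cost at most `δ_n² + ‖u - u_n ∘ T_n‖²_{L²(μ)}`.
-/

open MeasureTheory Filter

/-- The `TL²` distance between `(μ, f)` and `(θ, g)`. -/
noncomputable def dTL2 {d : ℕ} (μ θ : Measure (EuclideanSpace ℝ (Fin d)))
    (f g : EuclideanSpace ℝ (Fin d) → ℝ) : ℝ :=
  sInf { r : ℝ | ∃ π : Measure (EuclideanSpace ℝ (Fin d) × EuclideanSpace ℝ (Fin d)),
      π.fst = μ ∧ π.snd = θ ∧
      r = Real.sqrt (∫ p, dist p.1 p.2 ^ 2 + dist (f p.1) (g p.2) ^ 2 ∂π) }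

open ProbabilityTheory
open scoped ENNReal NNReal Topology

theorem UniformContinuous.exists_dist_le_add_mul_dist {X Y : Type*} [PseudoMetricSpace X]
    [PseudoMetricSpace Y] {w : X → Y} (hw : UniformContinuous w)
    (hb : Bornology.IsBounded (Set.range w)) {ε : ℝ} (hε : 0 < ε) :
    ∃ K : ℝ, ∀ x y, dist (w x) (w y) ≤ ε + K * dist x y := by
  obtain ⟨η, hη, hηw⟩ := Metric.uniformContinuous_iff.mp hw ε hε
  set M := Metric.diam (Set.range w)
  have hM : 0 ≤ M := Metric.diam_nonneg
  refine ⟨M / η, fun x y => ?_⟩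
  rcases lt_or_ge (dist x y) η with hxy | hxy
  · have := hηw hxy
    have : 0 ≤ M / η * dist x y := by positivity
    linarith
  · have hdiam : dist (w x) (w y) ≤ M :=
      Metric.dist_le_diam_of_mem hb (Set.mem_range_self x) (Set.mem_range_self y)
    have : M ≤ M / η * dist x y := by
      rw [div_mul_eq_mul_div, le_div_iff₀ hη]
      exact mul_le_mul_of_nonneg_left hxy hM
    linarith

theorem ENNReal.tendsto_nhds_zero_of_eventually_le_mul {ι : Type*} {l : Filter ι}
    {f : ι → ℝ≥0∞} {C : ℝ≥0∞} (hC : C ≠ ∞)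
    (h : ∀ ε : ℝ≥0, 0 < ε → ∀ᶠ i in l, f i ≤ C * ε) : Tendsto f l (𝓝 0) := by
  refine ENNReal.tendsto_nhds_zero.mpr fun ε hε => ?_
  obtain ⟨δ, hδ, hδC⟩ := ENNReal.exists_nnreal_pos_mul_lt hC hε.ne'
  filter_upwards [h δ hδ] with i hi
  exact hi.trans (by rw [mul_comm]; exact hδC.le)

theorem MeasureTheory.eLpNorm_le_add_of_norm_le {α E F G : Type*} [MeasurableSpace α]
    {μ : Measure α} {p : ℝ≥0∞} [NormedAddCommGroup E] [NormedAddCommGroup F]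
    [NormedAddCommGroup G] {f : α → E} {g : α → F} {h : α → G}
    (hg : AEStronglyMeasurable g μ) (hh : AEStronglyMeasurable h μ) (hp1 : 1 ≤ p)
    (hfgh : ∀ x, ‖f x‖ ≤ ‖g x‖ + ‖h x‖) :
    eLpNorm f p μ ≤ eLpNorm g p μ + eLpNorm h p μ :=
  calc eLpNorm f p μ ≤ eLpNorm (fun x => ‖g x‖ + ‖h x‖) p μ := eLpNorm_mono_real hfgh
    _ ≤ eLpNorm (fun x => ‖g x‖) p μ + eLpNorm (fun x => ‖h x‖) p μ :=
      eLpNorm_add_le hg.norm hh.norm hp1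
    _ = eLpNorm g p μ + eLpNorm h p μ := by rw [eLpNorm_norm, eLpNorm_norm]

theorem MeasureTheory.tendsto_eLpNorm_of_ae_norm_le {α F : Type*} [MeasurableSpace α]
    {μ : Measure α} [IsFiniteMeasure μ] [NormedAddCommGroup F] {f : ℕ → α → F} {δ : ℕ → ℝ}
    (hf : ∀ n, ∀ᵐ x ∂μ, ‖f n x‖ ≤ δ n) (hδ : Tendsto δ atTop (𝓝 0)) (p : ℝ≥0∞) :
    Tendsto (fun n => eLpNorm (f n) p μ) atTop (𝓝 0) := by
  have hlim : Tendsto (fun n => μ Set.univ ^ p.toReal⁻¹ * ENNReal.ofReal (δ n)) atTop (𝓝 0) := by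
    simpa using ENNReal.Tendsto.const_mul (ENNReal.tendsto_ofReal hδ) (Or.inr (by finiteness))
  exact tendsto_of_tendsto_of_tendsto_of_le_of_le tendsto_const_nhds hlim (fun _ => zero_le)
    fun n => eLpNorm_le_of_ae_bound (hf n)

theorem MeasureTheory.eLpNorm_two_le_ofReal_sqrt_integral {α F : Type*} [MeasurableSpace α]
    {μ : Measure α} [NormedAddCommGroup F] {f : α → F} {c : α → ℝ} (hc : Integrable c μ)
    (hfc : ∀ x, ‖f x‖ ^ 2 ≤ c x) : eLpNorm f 2 μ ≤ ENNReal.ofReal √(∫ x, c x ∂μ) := by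
  have hc0 : 0 ≤ᵐ[μ] c := ae_of_all _ fun x => (sq_nonneg _).trans (hfc x)
  rw [eLpNorm_eq_lintegral_rpow_enorm_toReal two_ne_zero ENNReal.ofNat_ne_top,
    Real.sqrt_eq_rpow, ← ENNReal.ofReal_rpow_of_nonneg (integral_nonneg_of_ae hc0) (by norm_num),
    ofReal_integral_eq_lintegral_ofReal hc hc0]
  simp only [ENNReal.toReal_ofNat, one_div]
  gcongr with x
  rw [← ofReal_norm, ENNReal.ofReal_rpow_of_nonneg (norm_nonneg _) (by norm_num)]
  exact ENNReal.ofReal_le_ofReal (by exact_mod_cast hfc x)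

theorem MeasureTheory.MemLp.integral_norm_sq_eq {α F : Type*} [MeasurableSpace α]
    {μ : Measure α} [NormedAddCommGroup F] {f : α → F} (hf : MemLp f 2 μ) :
    ∫ x, ‖f x‖ ^ 2 ∂μ = (eLpNorm f 2 μ).toReal ^ 2 := by
  have h0 : 0 ≤ ∫ x, ‖f x‖ ^ (2 : ℝ) ∂μ := integral_nonneg fun x => by positivity
  rw [hf.eLpNorm_eq_integral_rpow_norm two_ne_zero ENNReal.ofNat_ne_top, ENNReal.toReal_ofNat,
    ENNReal.toReal_ofReal (by positivity), ← Real.rpow_natCast, ← Real.rpow_mul h0]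
  norm_num

theorem MeasureTheory.Measure.map_prodMap_compProd_comap {α β γ : Type*} [MeasurableSpace α]
    [MeasurableSpace β] [MeasurableSpace γ] (μ : Measure α) [SFinite μ] (κ : Kernel β γ)
    [IsSFiniteKernel κ] {f : α → β} (hf : Measurable f) :
    (μ ⊗ₘ κ.comap f hf).map (Prod.map f id) = μ.map f ⊗ₘ κ := by
  ext s hs
  rw [Measure.map_apply (hf.prodMap measurable_id) hs,
    Measure.compProd_apply ((hf.prodMap measurable_id) hs), Measure.compProd_apply hs,
    lintegral_map (Kernel.measurable_kernel_prodMk_left hs) hf]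
  rfl

theorem exists_gluing_of_measurePreserving {X Y Z : Type*} [MeasurableSpace X]
    [MeasurableSpace Y] [MeasurableSpace Z] [StandardBorelSpace X] [Nonempty X]
    {μ : Measure Z} [SFinite μ] {π : Measure (X × Y)} [IsFiniteMeasure π] {T : Z → Y}
    (hT : MeasurePreserving T μ π.snd) :
    ∃ θ : Measure (Z × X), MeasurePreserving Prod.fst θ μ ∧
      MeasurePreserving (fun q => (q.2, T q.1)) θ π := by
  set ρ := π.map Prod.swap
  refine ⟨μ ⊗ₘ ρ.condKernel.comap T hT.measurable, ⟨measurable_fst, Measure.fst_compProd _ _⟩,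
    ⟨(measurable_snd.prodMk (hT.measurable.comp measurable_fst)), ?_⟩⟩
  have hswap : (fun q : Z × X => (q.2, T q.1)) = Prod.swap ∘ Prod.map T id := rfl
  rw [hswap, ← Measure.map_map measurable_swap (hT.measurable.prodMap measurable_id),
    Measure.map_prodMap_compProd_comap, hT.map_eq, ← Measure.fst_map_swap,
    ρ.disintegrate ρ.condKernel, Measure.map_map measurable_swap measurable_swap,
    Prod.swap_swap_eq, Measure.map_id]

section Gluing

variable {X Y E : Type*} [MeasurableSpace X] [MeasurableSpace Y] [NormedAddCommGroup E]
  {p : ℝ≥0∞} {μ : Measure X}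

theorem eLpNorm_comp_fst_sub_comp_snd_le_add {θ : Measure (X × X)}
    (hfst : MeasurePreserving Prod.fst θ μ) (hsnd : MeasurePreserving Prod.snd θ μ)
    (hp1 : 1 ≤ p) {u w : X → E} (hu : AEStronglyMeasurable u μ) (hw : AEStronglyMeasurable w μ) :
    eLpNorm (fun q => u q.1 - u q.2) p θ ≤
      eLpNorm (fun q => w q.1 - w q.2) p θ + 2 * eLpNorm (u - w) p μ := by
  have hu₁ := hu.comp_measurePreserving hfst
  have hu₂ := hu.comp_measurePreserving hsnd
  have hw₁ := hw.comp_measurePreserving hfst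
  have hw₂ := hw.comp_measurePreserving hsnd
  have h₁ : eLpNorm (fun q => u q.1 - w q.1) p θ = eLpNorm (u - w) p μ := by
    rw [← eLpNorm_comp_measurePreserving (hu.sub hw) hfst]
    rfl
  have h₂ : eLpNorm (fun q => w q.2 - u q.2) p θ = eLpNorm (u - w) p μ := by
    rw [← eLpNorm_comp_measurePreserving (hu.sub hw) hsnd, ← eLpNorm_neg ((u - w) ∘ Prod.snd)]
    congr 1
    ext q
    simp
  calc eLpNorm (fun q => u q.1 - u q.2) p θ
      ≤ eLpNorm (fun q => u q.1 - w q.1) p θ + eLpNorm (fun q => w q.1 - u q.2) p θ :=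
        eLpNorm_le_add_of_norm_le (hu₁.sub hw₁) (hw₁.sub hu₂) hp1 fun q =>
          norm_sub_le_norm_sub_add_norm_sub _ _ _
    _ ≤ eLpNorm (fun q => u q.1 - w q.1) p θ
          + (eLpNorm (fun q => w q.1 - w q.2) p θ + eLpNorm (fun q => w q.2 - u q.2) p θ) := by
        gcongr
        exact eLpNorm_le_add_of_norm_le (hw₁.sub hw₂) (hw₂.sub hu₂) hp1 fun q =>
          norm_sub_le_norm_sub_add_norm_sub _ _ _
    _ = eLpNorm (fun q => w q.1 - w q.2) p θ + 2 * eLpNorm (u - w) p μ := by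
        rw [h₁, h₂]
        ring

theorem eLpNorm_sub_comp_le_of_gluing {ν : Measure Y} {π : Measure (X × Y)}
    {θ : Measure (X × X)} {T : X → Y} (hT : MeasurePreserving T μ ν)
    (hπ₁ : MeasurePreserving Prod.fst π μ) (hπ₂ : MeasurePreserving Prod.snd π ν)
    (hθ₁ : MeasurePreserving Prod.fst θ μ) (hθ₂ : MeasurePreserving (fun q => (q.2, T q.1)) θ π)
    (hp1 : 1 ≤ p) {u : X → E} {v : Y → E} (hu : AEStronglyMeasurable u μ)
    (hv : AEStronglyMeasurable v ν) :
    eLpNorm (fun x => u x - v (T x)) p μ ≤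
      eLpNorm (fun q => u q.1 - u q.2) p θ + eLpNorm (fun q => u q.1 - v q.2) p π := by
  have hθ₂' : MeasurePreserving Prod.snd θ μ := hπ₁.comp hθ₂
  have hu₁ := hu.comp_measurePreserving hθ₁
  have hu₂ := hu.comp_measurePreserving hθ₂'
  have hvT := hv.comp_measurePreserving (hT.comp hθ₁)
  have hθμ : eLpNorm (fun q => u q.1 - v (T q.1)) p θ = eLpNorm (fun x => u x - v (T x)) p μ := by
    have := eLpNorm_comp_measurePreserving (p := p) (hu.sub (hv.comp_measurePreserving hT)) hθ₁
    exact this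
  have hθπ : eLpNorm (fun q => u q.2 - v (T q.1)) p θ = eLpNorm (fun q => u q.1 - v q.2) p π := by
    have := eLpNorm_comp_measurePreserving (p := p)
      ((hu.comp_measurePreserving hπ₁).sub (hv.comp_measurePreserving hπ₂)) hθ₂
    exact this
  rw [← hθμ, ← hθπ]
  exact eLpNorm_le_add_of_norm_le (hu₁.sub hu₂) (hu₂.sub hvT) hp1 fun q =>
    norm_sub_le_norm_sub_add_norm_sub _ _ _

end Gluing

theorem eLpNorm_comp_fst_sub_comp_snd_le {X E : Type*} [PseudoMetricSpace X]
    [SecondCountableTopology X] [MeasurableSpace X] [BorelSpace X] [NormedAddCommGroup E]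
    {p : ℝ≥0∞} {w : X → E} {ε K : ℝ}
    (hw : ∀ x y, dist (w x) (w y) ≤ ε + K * dist x y) (hp1 : 1 ≤ p) (θ : Measure (X × X)) :
    eLpNorm (fun q => w q.1 - w q.2) p θ ≤
      θ Set.univ ^ p.toReal⁻¹ * ‖ε‖ₑ + ‖K‖ₑ * eLpNorm (fun q => dist q.1 q.2) p θ := by
  have hdist : AEStronglyMeasurable (fun q : X × X => dist q.1 q.2) θ :=
    continuous_dist.aestronglyMeasurable
  calc eLpNorm (fun q => w q.1 - w q.2) p θ
      ≤ eLpNorm (fun _ => ε) p θ + eLpNorm (fun q => K * dist q.1 q.2) p θ :=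
        eLpNorm_le_add_of_norm_le aestronglyMeasurable_const (hdist.const_mul K) hp1
          fun q => by
            rw [← dist_eq_norm]
            exact (hw q.1 q.2).trans (add_le_add (Real.le_norm_self ε) (Real.le_norm_self _))
    _ ≤ _ := by
        gcongr
        · rw [← ofReal_norm]
          exact eLpNorm_le_of_ae_bound (ae_of_all _ fun _ => le_rfl)
        · exact eLpNorm_const_smul_le (c := K) (f := fun q : X × X => dist q.1 q.2)

theorem eLpNorm_dist_le_of_gluing {X : Type*} [PseudoMetricSpace X] [SecondCountableTopology X]
    [MeasurableSpace X] [BorelSpace X] {p : ℝ≥0∞} {μ : Measure X} {π θ : Measure (X × X)}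
    {T : X → X} (hT : Measurable T) (hθ₁ : MeasurePreserving Prod.fst θ μ)
    (hθ₂ : MeasurePreserving (fun q => (q.2, T q.1)) θ π) (hp1 : 1 ≤ p) :
    eLpNorm (fun q => dist q.1 q.2) p θ ≤
      eLpNorm (fun x => dist x (T x)) p μ + eLpNorm (fun q => dist q.1 q.2) p π := by
  have hθμ : eLpNorm (fun q => dist q.1 (T q.1)) p θ = eLpNorm (fun x => dist x (T x)) p μ := by
    have := eLpNorm_comp_measurePreserving (p := p)
      (measurable_id.dist hT).aestronglyMeasurable hθ₁
    exact this
  have hθπ : eLpNorm (fun q => dist (T q.1) q.2) p θ = eLpNorm (fun q => dist q.1 q.2) p π := by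
    have := eLpNorm_comp_measurePreserving (p := p)
      (continuous_snd.dist continuous_fst).aestronglyMeasurable hθ₂
    simpa only [Function.comp_def, dist_comm] using this
  rw [← hθμ, ← hθπ]
  exact eLpNorm_le_add_of_norm_le
    (measurable_fst.dist (hT.comp measurable_fst)).aestronglyMeasurable
    ((hT.comp measurable_fst).dist measurable_snd).aestronglyMeasurable hp1 fun q => by
      simpa only [Real.norm_of_nonneg dist_nonneg] using dist_triangle q.1 (T q.1) q.2

section Couplings

variable {X E : Type*} [MetricSpace X] [SecondCountableTopology X] [WeaklyLocallyCompactSpace X]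
  [MeasurableSpace X] [BorelSpace X] [NormedAddCommGroup E] [NormedSpace ℝ E] {p : ℝ≥0∞}

theorem tendsto_eLpNorm_comp_fst_sub_comp_snd (hp1 : 1 ≤ p) (hp : p ≠ ∞)
    {μ : Measure X} [IsFiniteMeasure μ] [μ.Regular] {θ : ℕ → Measure (X × X)}
    (hfst : ∀ n, MeasurePreserving Prod.fst (θ n) μ)
    (hsnd : ∀ n, MeasurePreserving Prod.snd (θ n) μ)
    (hθ : Tendsto (fun n => eLpNorm (fun q => dist q.1 q.2) p (θ n)) atTop (𝓝 0))
    {u : X → E} (hu : MemLp u p μ) :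
    Tendsto (fun n => eLpNorm (fun q => u q.1 - u q.2) p (θ n)) atTop (𝓝 0) := by
  refine ENNReal.tendsto_nhds_zero_of_eventually_le_mul (C := μ Set.univ ^ p.toReal⁻¹ + 3)
    (by finiteness) fun ε hε => ?_
  obtain ⟨w, hw_supp, hw_approx, hw_cont, -⟩ :=
    hu.exists_hasCompactSupport_eLpNorm_sub_le hp (ENNReal.coe_ne_zero.mpr hε.ne')
  obtain ⟨K, hK⟩ := UniformContinuous.exists_dist_le_add_mul_dist
    (hw_cont.uniformContinuous_of_tendsto_cocompact hw_supp.is_zero_at_infty)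
    (hw_supp.isCompact_range hw_cont).isBounded (NNReal.coe_pos.mpr hε)
  have hKθ : ∀ᶠ n in atTop, ‖K‖ₑ * eLpNorm (fun q => dist q.1 q.2) p (θ n) < ε := by
    refine (ENNReal.Tendsto.const_mul hθ (Or.inr enorm_ne_top)).eventually_lt_const ?_
    simpa using hε
  filter_upwards [hKθ] with n hn
  have hθμ : θ n Set.univ = μ Set.univ := by
    rw [← Measure.fst_univ, Measure.fst, (hfst n).map_eq]
  calc eLpNorm (fun q => u q.1 - u q.2) p (θ n)
      ≤ eLpNorm (fun q => w q.1 - w q.2) p (θ n) + 2 * eLpNorm (u - w) p μ :=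
        eLpNorm_comp_fst_sub_comp_snd_le_add (hfst n) (hsnd n) hp1 hu.1
          hw_cont.aestronglyMeasurable
    _ ≤ θ n Set.univ ^ p.toReal⁻¹ * ‖(ε : ℝ)‖ₑ
          + ‖K‖ₑ * eLpNorm (fun q => dist q.1 q.2) p (θ n) + 2 * ε := by
        gcongr
        exact eLpNorm_comp_fst_sub_comp_snd_le hK hp1 _
    _ ≤ μ Set.univ ^ p.toReal⁻¹ * ε + ε + 2 * ε := by
        rw [hθμ]
        gcongr
        simp
    _ = (μ Set.univ ^ p.toReal⁻¹ + 3) * ε := by ring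

theorem tendsto_eLpNorm_sub_comp_of_couplings [StandardBorelSpace X] [Nonempty X]
    (hp1 : 1 ≤ p) (hp : p ≠ ∞) {μ : Measure X} [IsFiniteMeasure μ] [μ.Regular]
    {μs : ℕ → Measure X} {T : ℕ → X → X} (hT : ∀ n, MeasurePreserving (T n) μ (μs n))
    (hT0 : Tendsto (fun n => eLpNorm (fun x => dist x (T n x)) p μ) atTop (𝓝 0))
    {π : ℕ → Measure (X × X)} (hπ₁ : ∀ n, MeasurePreserving Prod.fst (π n) μ)
    (hπ₂ : ∀ n, MeasurePreserving Prod.snd (π n) (μs n))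
    (hπ0 : Tendsto (fun n => eLpNorm (fun q => dist q.1 q.2) p (π n)) atTop (𝓝 0))
    {u : X → E} {us : ℕ → X → E} (hu : MemLp u p μ)
    (hus : ∀ n, AEStronglyMeasurable (us n) (μs n))
    (hπu : Tendsto (fun n => eLpNorm (fun q => u q.1 - us n q.2) p (π n)) atTop (𝓝 0)) :
    Tendsto (fun n => eLpNorm (fun x => u x - us n (T n x)) p μ) atTop (𝓝 0) := by
  have hπfin : ∀ n, IsFiniteMeasure (π n) := fun n =>
    ⟨by rw [← Measure.fst_univ, Measure.fst, (hπ₁ n).map_eq]; exact measure_lt_top μ _⟩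
  choose θ hθ₁ hθ₂ using fun n => exists_gluing_of_measurePreserving
    (μ := μ) (π := π n) (T := T n) (by rw [Measure.snd, (hπ₂ n).map_eq]; exact hT n)
  have hθ0 : Tendsto (fun n => eLpNorm (fun q => dist q.1 q.2) p (θ n)) atTop (𝓝 0) :=
    tendsto_of_tendsto_of_tendsto_of_le_of_le tendsto_const_nhds (by simpa using hT0.add hπ0)
      (fun _ => zero_le) fun n => eLpNorm_dist_le_of_gluing (hT n).measurable (hθ₁ n) (hθ₂ n) hp1
  have hu0 := tendsto_eLpNorm_comp_fst_sub_comp_snd hp1 hp hθ₁ (fun n => (hπ₁ n).comp (hθ₂ n))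
    hθ0 hu
  exact tendsto_of_tendsto_of_tendsto_of_le_of_le tendsto_const_nhds (by simpa using hu0.add hπu)
    (fun _ => zero_le) fun n =>
      eLpNorm_sub_comp_le_of_gluing (hT n) (hπ₁ n) (hπ₂ n) (hθ₁ n) (hθ₂ n) hp1 hu.1 (hus n)

end Couplings

section TL2

variable {d : ℕ} {μ ν : Measure (EuclideanSpace ℝ (Fin d))} {f g : EuclideanSpace ℝ (Fin d) → ℝ}

theorem dTL2_nonneg : 0 ≤ dTL2 μ ν f g :=
  Real.sInf_nonneg fun _ ⟨_, _, _, hr⟩ => hr ▸ Real.sqrt_nonneg _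

theorem dTL2_le_of_coupling {π : Measure (EuclideanSpace ℝ (Fin d) × EuclideanSpace ℝ (Fin d))}
    (hπ₁ : π.fst = μ) (hπ₂ : π.snd = ν) :
    dTL2 μ ν f g ≤ √(∫ p, dist p.1 p.2 ^ 2 + dist (f p.1) (g p.2) ^ 2 ∂π) :=
  csInf_le ⟨0, fun _ ⟨_, _, _, hr⟩ => hr ▸ Real.sqrt_nonneg _⟩ ⟨π, hπ₁, hπ₂, rfl⟩

theorem exists_coupling_lt_dTL2_add [IsProbabilityMeasure μ] [IsProbabilityMeasure ν] {ε : ℝ}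
    (hε : 0 < ε) :
    ∃ π : Measure (EuclideanSpace ℝ (Fin d) × EuclideanSpace ℝ (Fin d)), π.fst = μ ∧ π.snd = ν ∧
      √(∫ p, dist p.1 p.2 ^ 2 + dist (f p.1) (g p.2) ^ 2 ∂π) < dTL2 μ ν f g + ε := by
  have hlt : dTL2 μ ν f g < dTL2 μ ν f g + ε := lt_add_of_pos_right _ hε
  obtain ⟨_, ⟨π, hπ₁, hπ₂, rfl⟩, hlt⟩ :=
    exists_lt_of_csInf_lt (by exact ⟨_, μ.prod ν, Measure.fst_prod, Measure.snd_prod, rfl⟩) hlt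
  exact ⟨π, hπ₁, hπ₂, hlt⟩

-- Without integrability the Bochner integral in `dTL2` would be the junk value `0`.
theorem integrable_cost_of_coupling [IsFiniteMeasure μ] {D : Set (EuclideanSpace ℝ (Fin d))}
    (hD : Bornology.IsBounded D) (hμD : μ Dᶜ = 0) (hνD : ν Dᶜ = 0) (hf : MemLp f 2 μ)
    (hg : MemLp g 2 ν) {π : Measure (EuclideanSpace ℝ (Fin d) × EuclideanSpace ℝ (Fin d))}
    (hπ₁ : π.fst = μ) (hπ₂ : π.snd = ν) :
    Integrable (fun p => dist p.1 p.2 ^ 2 + dist (f p.1) (g p.2) ^ 2) π := by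
  have : IsFiniteMeasure π := ⟨by rw [← Measure.fst_univ, hπ₁]; exact measure_lt_top μ _⟩
  have hD₁ : ∀ᵐ p ∂π, p.1 ∈ D :=
    ae_of_ae_map measurable_fst.aemeasurable (ae_iff.mpr (by rw [← Measure.fst, hπ₁]; exact hμD))
  have hD₂ : ∀ᵐ p ∂π, p.2 ∈ D :=
    ae_of_ae_map measurable_snd.aemeasurable (ae_iff.mpr (by rw [← Measure.snd, hπ₂]; exact hνD))
  have hdist : MemLp (fun p : EuclideanSpace ℝ (Fin d) × EuclideanSpace ℝ (Fin d) =>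
      dist p.1 p.2) 2 π :=
    MemLp.of_bound continuous_dist.aestronglyMeasurable (Metric.diam D) <| by
      filter_upwards [hD₁, hD₂] with p hp₁ hp₂
      rw [Real.norm_of_nonneg dist_nonneg]
      exact Metric.dist_le_diam_of_mem hD hp₁ hp₂
  have hfg : MemLp (fun p : EuclideanSpace ℝ (Fin d) × EuclideanSpace ℝ (Fin d) =>
      f p.1 - g p.2) 2 π :=
    (hf.comp_measurePreserving ⟨measurable_fst, hπ₁⟩).sub
      (hg.comp_measurePreserving ⟨measurable_snd, hπ₂⟩)
  simp only [Real.dist_eq, sq_abs]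
  exact hdist.integrable_sq.add hfg.integrable_sq

theorem exists_couplings_of_tendsto_dTL2 [IsProbabilityMeasure μ]
    {μs : ℕ → Measure (EuclideanSpace ℝ (Fin d))} [∀ n, IsProbabilityMeasure (μs n)]
    {D : Set (EuclideanSpace ℝ (Fin d))} (hD : Bornology.IsBounded D) (hμD : μ Dᶜ = 0)
    (hμsD : ∀ n, μs n Dᶜ = 0) {u : EuclideanSpace ℝ (Fin d) → ℝ}
    {us : ℕ → EuclideanSpace ℝ (Fin d) → ℝ} (hu : MemLp u 2 μ) (hus : ∀ n, MemLp (us n) 2 (μs n))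
    (h : Tendsto (fun n => dTL2 μ (μs n) u (us n)) atTop (𝓝 0)) :
    ∃ π : ℕ → Measure (EuclideanSpace ℝ (Fin d) × EuclideanSpace ℝ (Fin d)),
      (∀ n, MeasurePreserving Prod.fst (π n) μ) ∧ (∀ n, MeasurePreserving Prod.snd (π n) (μs n)) ∧
      Tendsto (fun n => eLpNorm (fun q => dist q.1 q.2) 2 (π n)) atTop (𝓝 0) ∧
      Tendsto (fun n => eLpNorm (fun q => u q.1 - us n q.2) 2 (π n)) atTop (𝓝 0) := by
  choose π hπ₁ hπ₂ hπ using fun n : ℕ =>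
    exists_coupling_lt_dTL2_add (μ := μ) (ν := μs n) (f := u) (g := us n)
      (Nat.one_div_pos_of_nat (n := n))
  have hbound : Tendsto (fun n : ℕ => ENNReal.ofReal (dTL2 μ (μs n) u (us n) + 1 / (n + 1)))
      atTop (𝓝 0) := by
    have := ENNReal.tendsto_ofReal (by simpa using h.add tendsto_one_div_add_atTop_nhds_zero_nat)
    simpa only [ENNReal.ofReal_zero, one_div] using this
  have hle : ∀ n {F : Type} [NormedAddCommGroup F]
      (φ : EuclideanSpace ℝ (Fin d) × EuclideanSpace ℝ (Fin d) → F),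
      (∀ q, ‖φ q‖ ^ 2 ≤ dist q.1 q.2 ^ 2 + dist (u q.1) (us n q.2) ^ 2) →
      eLpNorm φ 2 (π n) ≤ ENNReal.ofReal (dTL2 μ (μs n) u (us n) + 1 / (n + 1)) := fun n _ _ φ hφ =>
    (eLpNorm_two_le_ofReal_sqrt_integral
      (integrable_cost_of_coupling hD hμD (hμsD n) hu (hus n) (hπ₁ n) (hπ₂ n)) hφ).trans
      (ENNReal.ofReal_le_ofReal (hπ n).le)
  refine ⟨π, fun n => ⟨measurable_fst, hπ₁ n⟩, fun n => ⟨measurable_snd, hπ₂ n⟩,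
    tendsto_of_tendsto_of_tendsto_of_le_of_le tendsto_const_nhds hbound (fun _ => zero_le)
      fun n => hle n _ fun q => ?_,
    tendsto_of_tendsto_of_tendsto_of_le_of_le tendsto_const_nhds hbound (fun _ => zero_le)
      fun n => hle n _ fun q => ?_⟩
  · rw [Real.norm_of_nonneg dist_nonneg]
    exact le_add_of_nonneg_right (sq_nonneg _)
  · rw [← dist_eq_norm]
    exact le_add_of_nonneg_left (sq_nonneg _)

theorem dTL2_le_of_measurePreserving [IsProbabilityMeasure μ]
    {T : EuclideanSpace ℝ (Fin d) → EuclideanSpace ℝ (Fin d)} (hT : MeasurePreserving T μ ν)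
    {δ : ℝ} (hTδ : ∀ᵐ x ∂μ, dist x (T x) ≤ δ) (hf : MemLp f 2 μ) (hg : MemLp g 2 ν) :
    dTL2 μ ν f g ≤ √(δ ^ 2 + ∫ x, |f x - g (T x)| ^ 2 ∂μ) := by
  have hgraph : Measurable fun x => (x, T x) := measurable_id.prodMk hT.measurable
  have hπ₁ : (μ.map fun x => (x, T x)).fst = μ := by
    rw [Measure.fst_map_prodMk hT.measurable, Measure.map_id']
  have hπ₂ : (μ.map fun x => (x, T x)).snd = ν := by
    rw [show (μ.map fun x => (x, T x)) = μ.map fun x => (id x, T x) from rfl,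
      Measure.snd_map_prodMk measurable_id, hT.map_eq]
  have hcost : AEStronglyMeasurable
      (fun p : EuclideanSpace ℝ (Fin d) × EuclideanSpace ℝ (Fin d) =>
        dist p.1 p.2 ^ 2 + dist (f p.1) (g p.2) ^ 2) (μ.map fun x => (x, T x)) := by
    have hfg := (hf.1.comp_measurePreserving ⟨measurable_fst, hπ₁⟩).sub
      (hg.1.comp_measurePreserving ⟨measurable_snd, hπ₂⟩)
    simp only [Real.dist_eq]
    exact (continuous_dist.aestronglyMeasurable.pow 2).add (hfg.norm.pow 2)
  have hdist : Integrable (fun x => dist x (T x) ^ 2) μ :=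
    (MemLp.of_bound (measurable_id.dist hT.measurable).aestronglyMeasurable δ
      (hTδ.mono fun x hx => by rwa [Real.norm_of_nonneg dist_nonneg])).integrable_sq
  have hfg : Integrable (fun x => |f x - g (T x)| ^ 2) μ := by
    simpa only [sq_abs, Pi.sub_apply, Function.comp_apply] using
      (hf.sub (hg.comp_measurePreserving hT)).integrable_sq
  calc dTL2 μ ν f g
      ≤ √(∫ p, dist p.1 p.2 ^ 2 + dist (f p.1) (g p.2) ^ 2 ∂(μ.map fun x => (x, T x))) :=
        dTL2_le_of_coupling hπ₁ hπ₂
    _ = √(∫ x, dist x (T x) ^ 2 ∂μ + ∫ x, |f x - g (T x)| ^ 2 ∂μ) := by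
        rw [integral_map hgraph.aemeasurable hcost, ← integral_add hdist hfg]
        simp only [Real.dist_eq]
    _ ≤ √(δ ^ 2 + ∫ x, |f x - g (T x)| ^ 2 ∂μ) := by
        gcongr
        calc ∫ x, dist x (T x) ^ 2 ∂μ ≤ ∫ _, δ ^ 2 ∂μ :=
              integral_mono_ae hdist (integrable_const _)
                (hTδ.mono fun x hx => pow_le_pow_left₀ dist_nonneg hx 2)
          _ = δ ^ 2 := by simp

end TL2

theorem TL2_conv_iff_via_transport_maps_general (d : ℕ) (D : Set (EuclideanSpace ℝ (Fin d)))
    (hDb : Bornology.IsBounded D)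
    (μ : Measure (EuclideanSpace ℝ (Fin d))) [IsProbabilityMeasure μ]
    (hμD : μ Dᶜ = 0)
    (μs : ℕ → Measure (EuclideanSpace ℝ (Fin d)))
    (hprob : ∀ n, IsProbabilityMeasure (μs n)) (hμsD : ∀ n, μs n Dᶜ = 0)
    (u : EuclideanSpace ℝ (Fin d) → ℝ) (us : ℕ → EuclideanSpace ℝ (Fin d) → ℝ)
    (hu : MemLp u 2 μ) (hus : ∀ n, MemLp (us n) 2 (μs n))
    (T : ℕ → EuclideanSpace ℝ (Fin d) → EuclideanSpace ℝ (Fin d))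
    (hTm : ∀ n, Measurable (T n)) (hTpush : ∀ n, Measure.map (T n) μ = μs n)
    (δ : ℕ → ℝ) (hδ : Tendsto δ atTop (nhds 0))
    (hT : ∀ n, ∀ x ∈ D, dist x (T n x) ≤ δ n) :
    (Tendsto (fun n => dTL2 μ (μs n) u (us n)) atTop (nhds 0) →
        Tendsto (fun n => ∫ x, |u x - us n (T n x)| ^ 2 ∂μ) atTop (nhds 0))
    ∧ ((∀ f : BoundedContinuousFunction (EuclideanSpace ℝ (Fin d)) ℝ,
          Tendsto (fun n => ∫ x, f x ∂(μs n)) atTop (nhds (∫ x, f x ∂μ))) →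
        Tendsto (fun n => ∫ x, |u x - us n (T n x)| ^ 2 ∂μ) atTop (nhds 0) →
        Tendsto (fun n => dTL2 μ (μs n) u (us n)) atTop (nhds 0)) := by
  have := hprob
  have hTμ : ∀ n, MeasurePreserving (T n) μ (μs n) := fun n => ⟨hTm n, hTpush n⟩
  have hTδ : ∀ n, ∀ᵐ x ∂μ, dist x (T n x) ≤ δ n := fun n => (ae_iff.mpr hμD).mono (hT n)
  refine ⟨fun hTL => ?_, fun _ hL2 => ?_⟩
  · obtain ⟨π, hπ₁, hπ₂, hπ0, hπu⟩ := exists_couplings_of_tendsto_dTL2 hDb hμD hμsD hu hus hTL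
    have hstag : Tendsto (fun n => eLpNorm (fun x => dist x (T n x)) 2 μ) atTop (𝓝 0) :=
      tendsto_eLpNorm_of_ae_norm_le
        (fun n => (hTδ n).mono fun x hx => by rwa [Real.norm_of_nonneg dist_nonneg]) hδ 2
    have hL2 := tendsto_eLpNorm_sub_comp_of_couplings one_le_two ENNReal.ofNat_ne_top hTμ hstag
      hπ₁ hπ₂ hπ0 hu (fun n => (hus n).1) hπu
    have hG : ∀ n, ∫ x, |u x - us n (T n x)| ^ 2 ∂μ =
        (eLpNorm (fun x => u x - us n (T n x)) 2 μ).toReal ^ 2 := fun n => by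
      have hmem : MemLp (fun x => u x - us n (T n x)) 2 μ :=
        hu.sub ((hus n).comp_measurePreserving (hTμ n))
      simpa only [Real.norm_eq_abs] using hmem.integral_norm_sq_eq
    simp_rw [hG]
    simpa using ((ENNReal.tendsto_toReal ENNReal.zero_ne_top).comp hL2).pow 2
  · refine tendsto_of_tendsto_of_tendsto_of_le_of_le tendsto_const_nhds ?_
      (fun n => dTL2_nonneg) fun n => dTL2_le_of_measurePreserving (hTμ n) (hTδ n) hu (hus n)
    simpa using ((hδ.pow 2).add hL2).sqrt

/-- On a bounded domain `D`, with `μ` absolutely continuous, `(T_n)_♯ μ = μ_n` transportation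
maps with `‖Id − T_n‖_∞ → 0`: if `(μ_n, u_n) → (μ, u)` in `TL²` then `u_n ∘ T_n → u` in
`L²(μ)`; conversely if `μ_n ⇀ μ` weakly and `u_n ∘ T_n → u` in `L²(μ)`, then
`(μ_n, u_n) → (μ, u)` in `TL²`. -/
theorem TL2_conv_iff_via_transport_maps (d : ℕ) (D : Set (EuclideanSpace ℝ (Fin d)))
    (hDo : IsOpen D) (hDb : Bornology.IsBounded D)
    (μ : Measure (EuclideanSpace ℝ (Fin d))) [IsProbabilityMeasure μ]
    (hac : μ ≪ volume) (hμD : μ Dᶜ = 0)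
    (μs : ℕ → Measure (EuclideanSpace ℝ (Fin d)))
    (hprob : ∀ n, IsProbabilityMeasure (μs n)) (hμsD : ∀ n, μs n Dᶜ = 0)
    (u : EuclideanSpace ℝ (Fin d) → ℝ) (us : ℕ → EuclideanSpace ℝ (Fin d) → ℝ)
    (hu : MemLp u 2 μ) (hus : ∀ n, MemLp (us n) 2 (μs n))
    (v : EuclideanSpace ℝ (Fin d) → ℝ) (hvb : ∃ Cv, ∀ x, |v x| ≤ Cv)
    (hvl : ∃ Kv : NNReal, LipschitzWith Kv v)
    (T : ℕ → EuclideanSpace ℝ (Fin d) → EuclideanSpace ℝ (Fin d))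
    (hTm : ∀ n, Measurable (T n)) (hTpush : ∀ n, Measure.map (T n) μ = μs n)
    (δ : ℕ → ℝ) (hδ : Tendsto δ atTop (nhds 0))
    (hT : ∀ n, ∀ x ∈ D, dist x (T n x) ≤ δ n) :
    (Tendsto (fun n => dTL2 μ (μs n) u (us n)) atTop (nhds 0) →
        Tendsto (fun n => ∫ x, |u x - us n (T n x)| ^ 2 ∂μ) atTop (nhds 0))
    ∧ ((∀ f : BoundedContinuousFunction (EuclideanSpace ℝ (Fin d)) ℝ,
          Tendsto (fun n => ∫ x, f x ∂(μs n)) atTop (nhds (∫ x, f x ∂μ))) →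
        Tendsto (fun n => ∫ x, |u x - us n (T n x)| ^ 2 ∂μ) atTop (nhds 0) →
        Tendsto (fun n => dTL2 μ (μs n) u (us n)) atTop (nhds 0)) :=
  TL2_conv_iff_via_transport_maps_general d D hDb μ hμD μs hprob hμsD u us hu hus T hTm hTpush δ hδ
    hT
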